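/- Let α be irrational with denominators (qₙ) and f : 𝕋 → ℝ of bounded variation with mean c_f = ∫f dλ. Then the sequence of functions (f^{(qₙ)} − qₙc_f)ₙ is uniformly bounded: |f^{(qₙ)}(x) − qₙ c_f| ≤ Var f for all x ∈ 𝕋 and n. -/

import Mathlib

/-!
Write `α = P/Q + θ` with `P, Q` coprime and `|θ| ≤ 1/Q²`. Modulo `1`, the orbit point `x + kα`
(`k < Q`) equals `x + kθ + σ(k)/Q`, where `σ(k) = kP mod Q` permutes `{0, …, Q-1}`. Since
`k|θ| ≤ 1/Q`, all the shifts `x + kθ` lie in one interval `[z, z + 1/Q]`, so each of the `Q` arcs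
`[z + j/Q, z + (j+1)/Q]` contains exactly one orbit point. On each arc, the value of `f` at a
point differs from its mean over the arc by at most the variation of `f` on the arc, and the
variations of the arcs add up to the variation of `f` over a period.
-/

open MeasureTheory Set Function

theorem Nat.Coprime.bijOn_mul_mod {P Q : ℕ} (h : P.Coprime Q) :
    BijOn (fun k => k * P % Q) (Finset.range Q) (Finset.range Q) := by
  have hmaps : MapsTo (fun k => k * P % Q) (Finset.range Q) (Finset.range Q) := fun k hk =>
    Finset.mem_range.mpr (Nat.mod_lt _ (Nat.zero_lt_of_lt (Finset.mem_range.mp hk)))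
  refine ((Finset.range Q).finite_toSet.injOn_iff_bijOn_of_mapsTo hmaps).mp
    fun k hk l hl hkl => ?_
  exact Nat.ModEq.eq_of_lt_of_lt (Nat.ModEq.cancel_right_of_coprime h.symm hkl)
    (Finset.mem_range.mp hk) (Finset.mem_range.mp hl)

section Convergents

variable {a p q : ℕ → ℕ}

theorem convergent_denoms_monotone (ha : ∀ n, 1 ≤ n → 1 ≤ a n) (hq0 : q 0 = 1)
    (hq1 : q 1 = a 1) (hqrec : ∀ n, q (n + 2) = a (n + 2) * q (n + 1) + q n) : Monotone q := by
  refine monotone_nat_of_le_succ fun n => ?_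
  rcases n with _ | n
  · rw [hq0, hq1]
    exact ha 1 le_rfl
  · rw [hqrec n]
    nlinarith [ha (n + 2) (by omega)]

theorem convergents_det (hq0 : q 0 = 1) (hp0 : p 0 = 0) (hp1 : p 1 = 1)
    (hqrec : ∀ n, q (n + 2) = a (n + 2) * q (n + 1) + q n)
    (hprec : ∀ n, p (n + 2) = a (n + 2) * p (n + 1) + p n) (n : ℕ) :
    (p (n + 1) * q n : ℤ) - p n * q (n + 1) = (-1) ^ n := by
  induction n with
  | zero => simp [hp0, hp1, hq0]
  | succ n ih =>
    rw [hprec, hqrec]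
    push_cast
    linear_combination -ih

theorem convergents_coprime (hq0 : q 0 = 1) (hp0 : p 0 = 0) (hp1 : p 1 = 1)
    (hqrec : ∀ n, q (n + 2) = a (n + 2) * q (n + 1) + q n)
    (hprec : ∀ n, p (n + 2) = a (n + 2) * p (n + 1) + p n) (n : ℕ) :
    (p n).Coprime (q n) := by
  rw [← Nat.isCoprime_iff_coprime]
  refine ⟨-((-1) ^ n * q (n + 1)), (-1) ^ n * p (n + 1), ?_⟩
  linear_combination (-1) ^ n * convergents_det hq0 hp0 hp1 hqrec hprec n +
    pow_mul_pow_eq_one (M := ℤ) n (a := -1) (b := -1) (by norm_num)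

end Convergents

theorem BoundedVariationOn.integrableOn_Icc {f : ℝ → ℝ} {a b : ℝ}
    (hf : BoundedVariationOn f (Icc a b)) : IntegrableOn f (Icc a b) := by
  obtain ⟨g, h, hg, hh, rfl⟩ := hf.locallyBoundedVariationOn.exists_monotoneOn_sub_monotoneOn
  exact (hg.integrableOn_isCompact isCompact_Icc).sub (hh.integrableOn_isCompact isCompact_Icc)

theorem BoundedVariationOn.abs_sub_intervalAverage_le {f : ℝ → ℝ} {a b y : ℝ} (hab : a < b)
    (hf : BoundedVariationOn f (Icc a b)) (hy : y ∈ Icc a b) :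
    |f y - ⨍ t in a..b, f t| ≤ (eVariationOn f (Icc a b)).toReal := by
  suffices ∃ t ∈ Icc a b, |f y - ⨍ t in a..b, f t| ≤ |f y - f t| by
    obtain ⟨t, ht, hle⟩ := this
    calc |f y - ⨍ t in a..b, f t| ≤ dist (f y) (f t) := hle
      _ = (edist (f y) (f t)).toReal := by rw [edist_dist, ENNReal.toReal_ofReal dist_nonneg]
      _ ≤ (eVariationOn f (Icc a b)).toReal :=
        ENNReal.toReal_mono hf (eVariationOn.edist_le f hy ht)
  have hint : IntegrableOn f (Ioc a b) := hf.integrableOn_Icc.mono_set Ioc_subset_Icc_self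
  have hμ : volume (Ioc a b) ≠ 0 := by simp [hab]
  have hμ' : volume (Ioc a b) ≠ ⊤ := by simp
  rw [uIoc_of_le hab.le]
  rcases le_total (f y) (⨍ t in Ioc a b, f t) with h | h
  · obtain ⟨t, ht, hft⟩ := exists_setAverage_le hμ hμ' hint
    refine ⟨t, Ioc_subset_Icc_self ht, ?_⟩
    rw [abs_of_nonpos (by linarith), abs_of_nonpos (by linarith)]
    linarith
  · obtain ⟨t, ht, hft⟩ := exists_le_setAverage hμ hμ' hint
    refine ⟨t, Ioc_subset_Icc_self ht, ?_⟩
    rw [abs_of_nonneg (by linarith), abs_of_nonneg (by linarith)]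
    linarith

theorem BoundedVariationOn.abs_sum_sub_mul_integral_le {f : ℝ → ℝ} {z : ℝ} {Q : ℕ} (hQ : 0 < Q)
    (hf : BoundedVariationOn f (Icc z (z + 1))) {s : ℕ → ℕ}
    (hs : BijOn s (Finset.range Q) (Finset.range Q)) {y : ℕ → ℝ}
    (hy : ∀ k < Q, y k ∈ Icc (z + s k / Q) (z + (s k + 1) / Q)) :
    |∑ k ∈ Finset.range Q, f (y k) - Q * ∫ t in z..z + 1, f t| ≤
      (eVariationOn f (Icc z (z + 1))).toReal := by
  set a : ℕ → ℝ := fun j => z + j / Q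
  have ha : Monotone a := fun i j hij => by simp only [a]; gcongr
  have ha0 : a 0 = z := by simp [a]
  have haQ : a Q = z + 1 := by simp [a, hQ.ne']
  have hstep : ∀ j, a (j + 1) - a j = (Q : ℝ)⁻¹ := fun j => by simp only [a]; push_cast; ring
  have hlt : ∀ j, a j < a (j + 1) := fun j => sub_pos.mp (hstep j ▸ by positivity)
  have hfj : ∀ j ∈ Finset.range Q, BoundedVariationOn f (Icc (a j) (a (j + 1))) := fun j hj =>
    hf.mono (Icc_subset_Icc (ha0 ▸ ha (Nat.zero_le _)) (haQ ▸ ha (Finset.mem_range.mp hj)))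
  have hint : Q * ∫ t in z..z + 1, f t = ∑ j ∈ Finset.range Q, ⨍ t in a j..a (j + 1), f t := by
    rw [← haQ, ← ha0, ← intervalIntegral.sum_integral_adjacent_intervals fun j hj =>
      (intervalIntegrable_iff_integrableOn_Icc_of_le (hlt j).le).mpr
        (hfj j (Finset.mem_range.mpr hj)).integrableOn_Icc, Finset.mul_sum]
    refine Finset.sum_congr rfl fun j _ => ?_
    rw [interval_average_eq, hstep, inv_inv, smul_eq_mul]
  have hvar : ∑ j ∈ Finset.range Q, (eVariationOn f (Icc (a j) (a (j + 1)))).toReal =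
      (eVariationOn f (Icc z (z + 1))).toReal := by
    rw [← ENNReal.toReal_sum fun j hj => hfj j hj, eVariationOn.sum' f ha, ha0, haQ]
  have reindex : ∀ g : ℕ → ℝ, ∑ k ∈ Finset.range Q, g (s k) = ∑ j ∈ Finset.range Q, g j :=
    fun g => Finset.sum_nbij s (fun _ hk => hs.mapsTo hk) hs.injOn hs.surjOn fun _ _ => rfl
  calc |∑ k ∈ Finset.range Q, f (y k) - Q * ∫ t in z..z + 1, f t|
      = |∑ k ∈ Finset.range Q, (f (y k) - ⨍ t in a (s k)..a (s k + 1), f t)| := by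
        rw [Finset.sum_sub_distrib, hint, reindex fun j => ⨍ t in a j..a (j + 1), f t]
    _ ≤ ∑ k ∈ Finset.range Q, |f (y k) - ⨍ t in a (s k)..a (s k + 1), f t| :=
        Finset.abs_sum_le_sum_abs _ _
    _ ≤ ∑ k ∈ Finset.range Q, (eVariationOn f (Icc (a (s k)) (a (s k + 1)))).toReal := by
        refine Finset.sum_le_sum fun k hk =>
          (hfj _ (hs.mapsTo hk)).abs_sub_intervalAverage_le (hlt _) ?_
        simpa only [a, Nat.cast_succ] using hy k (Finset.mem_range.mp hk)
    _ = (eVariationOn f (Icc z (z + 1))).toReal := by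
        rw [reindex fun j => (eVariationOn f (Icc (a j) (a (j + 1)))).toReal, hvar]

section Periodic

variable {E : Type*} [PseudoEMetricSpace E]

theorem Function.Periodic.eVariationOn_Icc_add_const {f : ℝ → E} {c : ℝ} (hf : Periodic f c)
    (a b : ℝ) : eVariationOn f (Icc (a + c) (b + c)) = eVariationOn f (Icc a b) := by
  rw [← image_add_const_Icc, ← eVariationOn.comp_eq_of_monotoneOn f (· + c)
    fun _ _ _ _ h => add_le_add_left h c]
  exact congrArg₂ _ (funext hf) rfl

theorem Function.Periodic.eVariationOn_Icc_add_period {f : ℝ → E} {T : ℝ} (hf : Periodic f T)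
    (hT : 0 < T) (z : ℝ) : eVariationOn f (Icc z (z + T)) = eVariationOn f (Icc 0 T) := by
  set m := ⌈z / T⌉
  have hzm : z ≤ m * T := (div_le_iff₀ hT).mp (Int.le_ceil _)
  have hmz : m * T ≤ z + T := by
    have := mul_lt_mul_of_pos_right (Int.ceil_lt_add_one (z / T)) hT
    rw [add_mul, div_mul_cancel₀ _ hT.ne', one_mul] at this
    exact this.le
  -- cut `[z, z + T]` at the multiple `m T` of the period and move both pieces into `[0, T]`
  set u := z + T - m * T
  have hleft : eVariationOn f (Icc z (m * T)) = eVariationOn f (Icc u T) := by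
    rw [← (hf.int_mul (1 - m)).eVariationOn_Icc_add_const z (m * T)]
    congr 2 <;> push_cast <;> ring
  have hright : eVariationOn f (Icc (m * T) (z + T)) = eVariationOn f (Icc 0 u) := by
    rw [← (hf.int_mul m).eVariationOn_Icc_add_const 0 u]
    congr 2 <;> ring
  have hsplit := eVariationOn.Icc_add_Icc f (s := univ) hzm hmz (mem_univ _)
  have hsplit' := eVariationOn.Icc_add_Icc f (s := univ) (a := 0) (b := u) (c := T)
    (by linarith) (by linarith) (mem_univ _)
  simp only [Set.univ_inter] at hsplit hsplit'
  rw [← hsplit, ← hsplit', hleft, hright, add_comm]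

end Periodic

theorem exists_forall_add_mul_mem_Icc {n : ℕ} {θ δ : ℝ} (h : ∀ k < n, k * |θ| ≤ δ) (x : ℝ) :
    ∃ z, ∀ k < n, x + k * θ ∈ Icc z (z + δ) := by
  rcases le_total 0 θ with hθ | hθ
  · refine ⟨x, fun k hk => ⟨?_, ?_⟩⟩
    · have : 0 ≤ (k : ℝ) * θ := by positivity
      linarith
    · have := h k hk
      rw [abs_of_nonneg hθ] at this
      linarith
  · refine ⟨x - δ, fun k hk => ⟨?_, ?_⟩⟩
    · have := h k hk
      rw [abs_of_nonpos hθ] at this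
      linarith
    · have : (k : ℝ) * θ ≤ 0 := mul_nonpos_of_nonneg_of_nonpos k.cast_nonneg hθ
      linarith

theorem Function.Periodic.denjoy_koksma {f : ℝ → ℝ} (hper : Periodic f 1)
    (hf : BoundedVariationOn f (Icc 0 1)) {α : ℝ} {P Q : ℕ} (hQ : 0 < Q) (hPQ : P.Coprime Q)
    (hα : |α - P / Q| ≤ 1 / Q ^ 2) (x : ℝ) :
    |∑ k ∈ Finset.range Q, f (x + k * α) - Q * ∫ t in (0 : ℝ)..1, f t| ≤
      (eVariationOn f (Icc 0 1)).toReal := by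
  set θ := α - P / Q
  obtain ⟨z, hz⟩ : ∃ z : ℝ, ∀ k < Q, x + k * θ ∈ Icc z (z + 1 / Q) := by
    refine exists_forall_add_mul_mem_Icc (fun k hk => ?_) x
    calc (k : ℝ) * |θ| ≤ Q * (1 / Q ^ 2) := by gcongr
      _ = 1 / Q := by field_simp
  have hvar : eVariationOn f (Icc z (z + 1)) = eVariationOn f (Icc 0 1) := by
    simpa using hper.eVariationOn_Icc_add_period one_pos z
  have hint : ∫ t in z..z + 1, f t = ∫ t in (0 : ℝ)..1, f t := by
    simpa using hper.intervalIntegral_add_eq z 0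
  have horbit : ∀ k ∈ Finset.range Q,
      f (x + k * α) = f (x + k * θ + (k * P % Q : ℕ) / Q) := by
    intro k _
    have hdiv : ((k * P % Q : ℕ) : ℝ) + Q * (k * P / Q : ℕ) = k * P := by
      exact_mod_cast Nat.mod_add_div (k * P) Q
    rw [← (hper.nat_mul (k * P / Q)) (x + k * θ + (k * P % Q : ℕ) / Q)]
    congr 1
    simp only [θ]
    field_simp
    linear_combination (-1 : ℝ) * hdiv
  rw [Finset.sum_congr rfl horbit, ← hint, ← hvar]
  refine BoundedVariationOn.abs_sum_sub_mul_integral_le hQ (by rwa [BoundedVariationOn, hvar])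
    hPQ.bijOn_mul_mod fun k hk => ?_
  obtain ⟨h1, h2⟩ := hz k hk
  rw [add_div]
  exact ⟨by linarith, by linarith⟩

theorem stmt10_general (α : ℝ) (a : ℕ → ℕ) (p q : ℕ → ℕ)
    (ha : ∀ n, 1 ≤ n → 1 ≤ a n)
    (hq0 : q 0 = 1) (hq1 : q 1 = a 1) (hqrec : ∀ n, q (n + 2) = a (n + 2) * q (n + 1) + q n)
    (hp0 : p 0 = 0) (hp1 : p 1 = 1) (hprec : ∀ n, p (n + 2) = a (n + 2) * p (n + 1) + p n)
    (happrox : ∀ n, 1 / (2 * (q n : ℝ) * q (n + 1)) < |α - (p n : ℝ) / q n| ∧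
      |α - (p n : ℝ) / q n| < 1 / ((q n : ℝ) * q (n + 1)))
    (f : ℝ → ℝ) (hper : Function.Periodic f 1)
    (hBV : BoundedVariationOn f (Set.Icc 0 1))
    (c : ℝ) (hc : c = ∫ t in (0:ℝ)..1, f t) :
    ∀ n : ℕ, ∀ x : ℝ,
      |∑ k ∈ Finset.range (q n), f (x + (k : ℝ) * α) - (q n : ℝ) * c| ≤
        (eVariationOn f (Set.Icc 0 1)).toReal := by
  intro n x
  have hmono := convergent_denoms_monotone ha hq0 hq1 hqrec
  have hqpos : 0 < q n := lt_of_lt_of_le (by rw [hq0]; exact one_pos) (hmono (Nat.zero_le n))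
  have hclose : |α - p n / q n| ≤ 1 / (q n : ℝ) ^ 2 :=
    calc |α - p n / q n| ≤ 1 / ((q n : ℝ) * q (n + 1)) := (happrox n).2.le
      _ ≤ 1 / (q n : ℝ) ^ 2 := by
        rw [sq]
        gcongr
        exact_mod_cast hmono n.le_succ
  rw [hc]
  exact hper.denjoy_koksma hBV hqpos (convergents_coprime hq0 hp0 hp1 hqrec hprec n) hclose x

/-- Let α be irrational with convergent denominators (qₙ) and f : 𝕋 → ℝ of
bounded variation with mean c_f = ∫ f dλ.  Then the sequence (f⁽qₙ⁾ − qₙc_f) is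
uniformly bounded: |f⁽qₙ⁾(x) − qₙc_f| ≤ Var f for all x and n. -/
theorem stmt10 (α : ℝ) (hα : Irrational α) (a : ℕ → ℕ) (p q : ℕ → ℕ)
    (ha : ∀ n, 1 ≤ n → 1 ≤ a n)
    (hq0 : q 0 = 1) (hq1 : q 1 = a 1) (hqrec : ∀ n, q (n + 2) = a (n + 2) * q (n + 1) + q n)
    (hp0 : p 0 = 0) (hp1 : p 1 = 1) (hprec : ∀ n, p (n + 2) = a (n + 2) * p (n + 1) + p n)
    (happrox : ∀ n, 1 / (2 * (q n : ℝ) * q (n + 1)) < |α - (p n : ℝ) / q n| ∧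
      |α - (p n : ℝ) / q n| < 1 / ((q n : ℝ) * q (n + 1)))
    (f : ℝ → ℝ) (hper : Function.Periodic f 1)
    (hBV : BoundedVariationOn f (Set.Icc 0 1))
    (c : ℝ) (hc : c = ∫ t in (0:ℝ)..1, f t) :
    ∀ n : ℕ, ∀ x : ℝ,
      |∑ k ∈ Finset.range (q n), f (x + (k : ℝ) * α) - (q n : ℝ) * c| ≤
        (eVariationOn f (Set.Icc 0 1)).toReal :=
  stmt10_general α a p q ha hq0 hq1 hqrec hp0 hp1 hprec happrox f hper hBV c hc
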